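/- arXiv:math/9801138 — 4 statements merged into one kernel-verified Lean document; each statement's English description precedes it below -/
import Mathlib

section
/- Let V be a k-vector space with a fixed subspace V⁺. For a subspace L ⊆ V such that L ∩ V⁺ and V/(L+V⁺) are finite dimensional, define the index i(L) := dim_k(L ∩ V⁺) - dim_k(V/(L+V⁺)). If A is a subspace commensurable with V⁺ and L ⊕ A = V, then i(L) = reldim(V⁺, A) := dim(V⁺/(V⁺∩A)) - dim(A/(V⁺∩A)). -/
open Module

private lemma map_mkQ_self_eq_bot {k V : Type*} [Field k] [AddCommGroup V] [Module k V]
    (p : Submodule k V) : p.map p.mkQ = ⊥ := by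
  rw [Submodule.eq_bot_iff]
  rintro y ⟨x, hx, rfl⟩
  simpa [Submodule.Quotient.mk_eq_zero] using hx

/-- Let `V⁺ ⊆ V` be a fixed subspace and `L` a point of the Grassmannian, i.e. a subspace
with `L ∩ V⁺` and `V/(L+V⁺)` finite dimensional; its index is
`i(L) = dim (L ∩ V⁺) - dim V/(L+V⁺)`.  If `A` is a subspace commensurable with `V⁺` and
`V = L ⊕ A`, then `i(L) = reldim(V⁺, A) = dim V⁺/(V⁺∩A) - dim A/(V⁺∩A)`. -/
theorem index_eq_reldim {k V : Type*} [Field k] [AddCommGroup V] [Module k V]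
    (Vplus L A : Submodule k V)
    (hfin1 : FiniteDimensional k ↥(L ⊓ Vplus))
    (hfin2 : FiniteDimensional k (V ⧸ (L ⊔ Vplus)))
    (hcomm : FiniteDimensional k
      (↥(A ⊔ Vplus) ⧸ Submodule.comap (A ⊔ Vplus).subtype (A ⊓ Vplus)))
    (hdisj : L ⊓ A = ⊥) (hsum : L ⊔ A = ⊤) :
    (finrank k ↥(L ⊓ Vplus) : ℤ) - (finrank k (V ⧸ (L ⊔ Vplus)) : ℤ) =
      (finrank k (↥Vplus ⧸ Submodule.comap Vplus.subtype (Vplus ⊓ A)) : ℤ) -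
        (finrank k (↥A ⧸ Submodule.comap A.subtype (Vplus ⊓ A)) : ℤ) := by
  classical
  have hcompl : IsCompl L A := ⟨disjoint_iff.mpr hdisj, codisjoint_iff.mpr hsum⟩
  set e : (V ⧸ L) ≃ₗ[k] A := Submodule.quotientEquivOfIsCompl L A hcompl with he
  -- projection onto A along L, restricted to Vplus
  set φ : ↥Vplus →ₗ[k] ↥A := e.toLinearMap.comp (L.mkQ.comp Vplus.subtype) with hφ
  set W₁ : Submodule k ↥Vplus := Submodule.comap Vplus.subtype (Vplus ⊓ A) with hW₁
  set W₂ : Submodule k ↥A := Submodule.comap A.subtype (Vplus ⊓ A) with hW₂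
  -- e fixes elements of A
  have hefix : ∀ (x : V) (hx : x ∈ A), e (L.mkQ x) = ⟨x, hx⟩ := by
    intro x hx
    exact Submodule.quotientEquivOfIsCompl_apply_mk_coe hcompl ⟨x, hx⟩
  have hφeq : ∀ (x : ↥Vplus) (hx : (x : V) ∈ A), φ x = ⟨x, hx⟩ := by
    intro x hx
    simp only [hφ, LinearMap.comp_apply, LinearEquiv.coe_coe, Submodule.coe_subtype]
    exact hefix x hx
  have h1 : W₁ ≤ Submodule.comap φ W₂ := by
    intro x hx
    rcases hx with ⟨hxV, hxA⟩
    simp only [Submodule.mem_comap, hW₂]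
    rw [hφeq x hxA]
    exact ⟨hxV, hxA⟩
  set φbar : (↥Vplus ⧸ W₁) →ₗ[k] (↥A ⧸ W₂) := Submodule.mapQ W₁ W₂ φ h1 with hφbar
  -- the kernel of φ corresponds to L ⊓ Vplus
  have hK : LinearMap.ker φ = Submodule.comap Vplus.subtype (L ⊓ Vplus) := by
    ext x
    simp only [LinearMap.mem_ker, hφ, LinearMap.comp_apply, LinearEquiv.coe_coe,
      Submodule.coe_subtype, Submodule.mem_comap, Submodule.mem_inf]
    constructor
    · intro h
      have h0 : L.mkQ (x : V) = 0 := by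
        have := congrArg e.symm h
        simpa using this
      exact ⟨(Submodule.Quotient.mk_eq_zero L).mp h0, x.2⟩
    · rintro ⟨hxL, -⟩
      rw [show L.mkQ (x : V) = 0 from (Submodule.Quotient.mk_eq_zero L).mpr hxL]
      simp
  have hKfin : finrank k ↥(LinearMap.ker φ) = finrank k ↥(L ⊓ Vplus) := by
    rw [hK]
    exact LinearEquiv.finrank_eq (Submodule.comapSubtypeEquivOfLe inf_le_right)
  -- finite dimensionality of Vplus ⧸ W₁ and A ⧸ W₂
  set W₀ : Submodule k ↥(A ⊔ Vplus) := Submodule.comap (A ⊔ Vplus).subtype (A ⊓ Vplus) with hW₀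
  haveI hfinV : FiniteDimensional k (↥Vplus ⧸ W₁) := by
    have hle : Vplus ≤ A ⊔ Vplus := le_sup_right
    have hc : W₁ ≤ Submodule.comap (Submodule.inclusion hle) W₀ := by
      rintro x ⟨hxV, hxA⟩; exact ⟨hxA, hxV⟩
    have hinj : Function.Injective (Submodule.mapQ W₁ W₀ (Submodule.inclusion hle) hc) := by
      rw [← LinearMap.ker_eq_bot, Submodule.mapQ, Submodule.ker_liftQ, LinearMap.ker_comp,
        Submodule.ker_mkQ]
      have hcc : Submodule.comap (Submodule.inclusion hle) W₀ = W₁ := by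
        ext x
        exact ⟨fun ⟨h1', h2⟩ => ⟨h2, h1'⟩, fun ⟨h1', h2⟩ => ⟨h2, h1'⟩⟩
      rw [hcc, map_mkQ_self_eq_bot]
    exact FiniteDimensional.of_injective _ hinj
  haveI hfinA : FiniteDimensional k (↥A ⧸ W₂) := by
    have hle : A ≤ A ⊔ Vplus := le_sup_left
    have hc : W₂ ≤ Submodule.comap (Submodule.inclusion hle) W₀ := by
      rintro x ⟨hxV, hxA⟩; exact ⟨hxA, hxV⟩
    have hinj : Function.Injective (Submodule.mapQ W₂ W₀ (Submodule.inclusion hle) hc) := by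
      rw [← LinearMap.ker_eq_bot, Submodule.mapQ, Submodule.ker_liftQ, LinearMap.ker_comp,
        Submodule.ker_mkQ]
      have hcc : Submodule.comap (Submodule.inclusion hle) W₀ = W₂ := by
        ext x
        exact ⟨fun ⟨h1', h2⟩ => ⟨h2, h1'⟩, fun ⟨h1', h2⟩ => ⟨h2, h1'⟩⟩
      rw [hcc, map_mkQ_self_eq_bot]
    exact FiniteDimensional.of_injective _ hinj
  -- comap φ W₂ = ker φ ⊔ W₁
  have h2 : Submodule.comap φ W₂ = LinearMap.ker φ ⊔ W₁ := by
    apply le_antisymm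
    · intro x hx
      have hx' : ((φ x : V) ∈ Vplus ⊓ A) := hx
      set y : ↥Vplus := ⟨(φ x : V), hx'.1⟩ with hy
      have hyW₁ : y ∈ W₁ := ⟨hx'.1, hx'.2⟩
      have hφy : φ y = φ x := by
        rw [hφeq y (φ x).2]
      have hker : x - y ∈ LinearMap.ker φ := by
        simp [LinearMap.mem_ker, map_sub, hφy]
      have hxy : x = (x - y) + y := by abel
      rw [hxy]
      exact Submodule.add_mem _ (Submodule.mem_sup_left hker) (Submodule.mem_sup_right hyW₁)
    · refine sup_le ?_ h1
      intro x hx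
      simp only [Submodule.mem_comap, LinearMap.mem_ker.mp hx]
      exact Submodule.zero_mem _
  -- kernel of φbar
  have hkerφbar : LinearMap.ker φbar = Submodule.map W₁.mkQ (LinearMap.ker φ) := by
    rw [hφbar, Submodule.mapQ, Submodule.ker_liftQ, LinearMap.ker_comp, Submodule.ker_mkQ, h2,
      Submodule.map_sup, map_mkQ_self_eq_bot, sup_bot_eq]
  have hkerdim : finrank k ↥(LinearMap.ker φbar) = finrank k ↥(L ⊓ Vplus) := by
    rw [hkerφbar, ← hKfin]
    have hrange : LinearMap.range (W₁.mkQ.comp (LinearMap.ker φ).subtype)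
        = Submodule.map W₁.mkQ (LinearMap.ker φ) := by
      rw [LinearMap.range_comp, Submodule.range_subtype]
    have hinj : Function.Injective (W₁.mkQ.comp (LinearMap.ker φ).subtype) := by
      rw [← LinearMap.ker_eq_bot, Submodule.eq_bot_iff]
      intro x hx0
      have hx : (x : ↥Vplus) ∈ W₁ := by
        simpa [Submodule.Quotient.mk_eq_zero] using hx0
      have hxK : (x : ↥Vplus) ∈ LinearMap.ker φ := x.2
      have hxK' : (x : ↥Vplus) ∈ Submodule.comap Vplus.subtype (L ⊓ Vplus) := hK ▸ hxK
      have hxL : ((x : ↥Vplus) : V) ∈ L := (Submodule.mem_comap.mp hxK').1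
      have hxA : ((x : ↥Vplus) : V) ∈ A := (Submodule.mem_comap.mp hx).2
      have : ((x : ↥Vplus) : V) ∈ L ⊓ A := ⟨hxL, hxA⟩
      rw [hdisj] at this
      ext
      exact (Submodule.mem_bot k).mp this
    rw [← hrange]
    exact LinearMap.finrank_range_of_inj hinj
  -- range of φbar and the cokernel
  set B : Submodule k ↥A := LinearMap.range φ with hB
  have hrangeφbar : LinearMap.range φbar = Submodule.map W₂.mkQ B := by
    rw [hφbar, Submodule.mapQ, Submodule.range_liftQ, LinearMap.range_comp]
  have hW₂B : W₂ ≤ B := by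
    intro x hx
    rcases (hx : (x : V) ∈ Vplus ⊓ A) with ⟨hxV, hxA⟩
    refine ⟨⟨(x : V), hxV⟩, ?_⟩
    rw [hφeq ⟨(x : V), hxV⟩ hxA]
  -- A ⧸ B ≃ V ⧸ (L ⊔ Vplus)
  set P : Submodule k (V ⧸ L) := Submodule.map L.mkQ (L ⊔ Vplus) with hP
  have hPV : P = Submodule.map L.mkQ Vplus := by
    rw [hP, Submodule.map_sup, map_mkQ_self_eq_bot, bot_sup_eq]
  have hmapP : Submodule.map (e : (V ⧸ L) →ₗ[k] ↥A) P = B := by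
    rw [hPV, hB, hφ, LinearMap.range_comp, LinearMap.range_comp, Submodule.range_subtype]
  have equiv1 : ((V ⧸ L) ⧸ P) ≃ₗ[k] (↥A ⧸ B) := Submodule.Quotient.equiv P B e hmapP
  have equiv2 : ((V ⧸ L) ⧸ P) ≃ₗ[k] (V ⧸ (L ⊔ Vplus)) :=
    Submodule.quotientQuotientEquivQuotient L (L ⊔ Vplus) le_sup_left
  have equiv3 : ((↥A ⧸ W₂) ⧸ LinearMap.range φbar) ≃ₗ[k] (↥A ⧸ B) := by
    rw [hrangeφbar]
    exact Submodule.quotientQuotientEquivQuotient W₂ B hW₂B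
  have hcokerdim : finrank k ((↥A ⧸ W₂) ⧸ LinearMap.range φbar)
      = finrank k (V ⧸ (L ⊔ Vplus)) := by
    rw [equiv3.finrank_eq, ← equiv1.finrank_eq, equiv2.finrank_eq]
  -- rank-nullity computations
  have h3 : finrank k ↥(LinearMap.range φbar) + finrank k ↥(LinearMap.ker φbar)
      = finrank k (↥Vplus ⧸ W₁) := LinearMap.finrank_range_add_finrank_ker φbar
  have h4 : finrank k ((↥A ⧸ W₂) ⧸ LinearMap.range φbar)
      + finrank k ↥(LinearMap.range φbar) = finrank k (↥A ⧸ W₂) :=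
    Submodule.finrank_quotient_add_finrank (LinearMap.range φbar)
  rw [hkerdim] at h3
  rw [hcokerdim] at h4
  omega
end

section
/- Let X ⊆ Grass^r(V) be a subset whose Plücker image is a projective line in ℙ(Λ^r V), and let L₁, L₂ be two distinct points of X. Then X = {L : L₁∩L₂ ⊆ L ⊆ L₁+L₂, dim L = r} = Grass¹((L₁+L₂)/(L₁∩L₂)) (pulled back), and the subspaces L₁+L₂ and L₁∩L₂ are independent of the choice of the two distinct points L₁, L₂ ∈ X. -/
/-!
A subspace is recovered from its Plücker vector as `L = {x | x ∧ ω(L) = 0}`. For `L₁ ≠ L₂` on the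
line, some `L₃` on it has `ω(L₃)` proportional to `ω(L₁) + ω(L₂)`; a vector `v ∈ L₃ \ (L₁ ∩ L₂)`
then satisfies `v ∧ ω(L₂) = -v ∧ ω(L₁)`, and comparing annihilators gives `L₂ ⊆ L₁ + kv`, so
`N = L₁ ∩ L₂` has codimension one in `L₁`. For a basis `z` of `N`, the map
`y ↦ y ∧ z₁ ∧ ⋯ ∧ z_{r-1}` sends `y ∉ N` to a multiple of `ω(N + ky)`; it therefore maps
`L₁ + L₂` onto `W`, which matches the points of the line with the `r`-dimensional subspaces
between `N` and `L₁ + L₂`.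
-/

open Module Classical

/-- The Plücker vector `ω(L) = l₁ ∧ ... ∧ lᵣ` of an `r`-dimensional subspace `L`, for a
choice of basis `l₁, ..., lᵣ` of `L` (well defined up to a nonzero scalar). -/
noncomputable def plueckerVec {k V : Type*} [Field k] [AddCommGroup V] [Module k V]
    (r : ℕ) (L : Submodule k V) : ExteriorAlgebra k V :=
  if h : Nonempty (Basis (Fin r) k ↥L) then
    ExteriorAlgebra.ιMulti k r (fun i => (h.some i : V)) else 0

namespace ExteriorAlgebra

variable {k V : Type*} [Field k] [AddCommGroup V] [Module k V]

theorem ιMulti_ne_zero_of_linearIndependent {n : ℕ} {v : Fin n → V}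
    (hv : LinearIndependent k v) : ιMulti k n v ≠ 0 := by
  have h := (exteriorPower.ιMulti_family_linearIndependent_field (n := n) hv).ne_zero
    (Set.powersetCard.ofFinEmbEquiv (OrderIso.refl (Fin n)).toOrderEmbedding)
  rw [Ne, ← Submodule.coe_eq_zero, exteriorPower.ιMulti_family_apply_coe] at h
  simpa [ιMulti_family] using h

theorem ιMulti_cons {n : ℕ} (y : V) (z : Fin n → V) :
    ιMulti k (n + 1) (Fin.cons y z) = ι k y * ιMulti k n z := by
  rw [ιMulti_succ_apply]
  rfl

def wedgeAnnihilator (ξ : ExteriorAlgebra k V) : Submodule k V :=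
  LinearMap.ker (LinearMap.mulRight k ξ ∘ₗ ι k)

theorem mem_wedgeAnnihilator {ξ : ExteriorAlgebra k V} {x : V} :
    x ∈ wedgeAnnihilator ξ ↔ ι k x * ξ = 0 :=
  Iff.rfl

theorem wedgeAnnihilator_smul {c : k} (hc : c ≠ 0) (ξ : ExteriorAlgebra k V) :
    wedgeAnnihilator (c • ξ) = wedgeAnnihilator ξ := by
  ext x
  simp only [mem_wedgeAnnihilator, mul_smul_comm, smul_eq_zero, hc, false_or]

theorem wedgeAnnihilator_neg (ξ : ExteriorAlgebra k V) :
    wedgeAnnihilator (-ξ) = wedgeAnnihilator ξ := by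
  ext x
  simp only [mem_wedgeAnnihilator, mul_neg, neg_eq_zero]

theorem wedgeAnnihilator_le_ι_mul (ξ : ExteriorAlgebra k V) (y : V) :
    wedgeAnnihilator ξ ≤ wedgeAnnihilator (ι k y * ξ) := by
  intro x hx
  rw [mem_wedgeAnnihilator] at hx ⊢
  rw [← mul_assoc, eq_neg_of_add_eq_zero_left (ι_add_mul_swap x y), neg_mul, mul_assoc, hx,
    mul_zero, neg_zero]

theorem wedgeAnnihilator_ιMulti {n : ℕ} {s : Fin n → V} (hs : LinearIndependent k s) :
    wedgeAnnihilator (ιMulti k n s) = Submodule.span k (Set.range s) := by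
  refine le_antisymm (fun x hx => ?_) (Submodule.span_le.2 ?_)
  · by_contra hxs
    exact ιMulti_ne_zero_of_linearIndependent (linearIndependent_finCons.2 ⟨hs, hxs⟩)
      (by rwa [ιMulti_cons])
  · rintro _ ⟨i, rfl⟩
    rw [SetLike.mem_coe, mem_wedgeAnnihilator, ← ιMulti_cons]
    exact AlternatingMap.map_eq_zero_of_eq _ _ (i := 0) (j := i.succ) rfl
      (Fin.succ_ne_zero i).symm

theorem ι_mul_ιMulti_eq_zero_iff {n : ℕ} {s : Fin n → V} (hs : LinearIndependent k s) {x : V} :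
    ι k x * ιMulti k n s = 0 ↔ x ∈ Submodule.span k (Set.range s) := by
  rw [← mem_wedgeAnnihilator, wedgeAnnihilator_ιMulti hs]

theorem wedgeAnnihilator_ι_mul_ιMulti {n : ℕ} {s : Fin n → V} (hs : LinearIndependent k s)
    {y : V} (hy : y ∉ Submodule.span k (Set.range s)) :
    wedgeAnnihilator (ι k y * ιMulti k n s) = k ∙ y ⊔ Submodule.span k (Set.range s) := by
  rw [← ιMulti_cons, wedgeAnnihilator_ιMulti (linearIndependent_finCons.2 ⟨hs, hy⟩),
    Fin.range_cons, Submodule.span_insert]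

end ExteriorAlgebra

theorem AlternatingMap.apply_eq_basis_det_smul {R M N ι : Type*} [CommRing R] [AddCommGroup M]
    [Module R M] [AddCommGroup N] [Module R N] [Fintype ι] [DecidableEq ι] (e : Basis ι R M)
    (f : M [⋀^ι]→ₗ[R] N) (v : ι → M) : f v = e.det v • f e := by
  have hf : f = (LinearMap.toSpanSingleton R N (f e)).compAlternatingMap e.det := by
    refine Basis.ext_alternating e fun i h => ?_
    let σ : Equiv.Perm ι := Equiv.ofBijective i (Finite.injective_iff_bijective.1 h)
    change f (e ∘ σ) = LinearMap.toSpanSingleton R N (f e) (e.det (e ∘ σ))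
    simp [AlternatingMap.map_perm, Basis.det_self]
  conv_lhs => rw [hf]
  rfl

open ExteriorAlgebra

section Pluecker

variable {k V : Type*} [Field k] [AddCommGroup V] [Module k V] [FiniteDimensional k V]

theorem Submodule.exists_linearIndependent_span_eq {r : ℕ} {L : Submodule k V}
    (hL : finrank k L = r) :
    ∃ w : Fin r → V, LinearIndependent k w ∧ Submodule.span k (Set.range w) = L := by
  let b := Module.finBasisOfFinrankEq k L hL
  refine ⟨L.subtype ∘ b, b.linearIndependent.map' _ L.ker_subtype, ?_⟩
  rw [Set.range_comp, ← Submodule.map_span, b.span_eq, Submodule.map_top, L.range_subtype]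

theorem plueckerVec_eq_smul_ιMulti {r : ℕ} {L : Submodule k V} (hL : finrank k L = r)
    {w : Fin r → V} (hw : LinearIndependent k w) (hwL : ∀ i, w i ∈ L) :
    ∃ c : k, c ≠ 0 ∧ plueckerVec r L = c • ιMulti k r w := by
  let w' : Fin r → L := fun i => ⟨w i, hwL i⟩
  let b := basisOfLinearIndependentOfCardEqFinrank' w'
    (LinearIndependent.of_comp L.subtype hw) (by rw [Fintype.card_fin, hL])
  have hb : Nonempty (Basis (Fin r) k L) := ⟨b⟩
  refine ⟨b.det hb.some, (b.isUnit_det _).ne_zero, ?_⟩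
  rw [plueckerVec, dif_pos hb]
  have h := ((ιMulti k r).compLinearMap L.subtype).apply_eq_basis_det_smul b hb.some
  simpa [b, w'] using h

theorem exists_plueckerVec_eq_smul_ιMulti {r : ℕ} {L : Submodule k V} (hL : finrank k L = r) :
    ∃ w : Fin r → V, LinearIndependent k w ∧ Submodule.span k (Set.range w) = L ∧
      ∃ c : k, c ≠ 0 ∧ plueckerVec r L = c • ιMulti k r w := by
  obtain ⟨w, hw, hwL⟩ := L.exists_linearIndependent_span_eq hL
  exact ⟨w, hw, hwL,
    plueckerVec_eq_smul_ιMulti hL hw fun i => hwL ▸ Submodule.subset_span ⟨i, rfl⟩⟩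

theorem wedgeAnnihilator_plueckerVec {r : ℕ} {L : Submodule k V} (hL : finrank k L = r) :
    wedgeAnnihilator (plueckerVec r L) = L := by
  obtain ⟨w, hw, hwL, c, hc, hω⟩ := exists_plueckerVec_eq_smul_ιMulti hL
  rw [hω, wedgeAnnihilator_smul hc, wedgeAnnihilator_ιMulti hw, hwL]

theorem plueckerVec_ne_zero {r : ℕ} {L : Submodule k V} (hL : finrank k L = r) :
    plueckerVec r L ≠ 0 := by
  obtain ⟨w, hw, -, c, hc, hω⟩ := exists_plueckerVec_eq_smul_ιMulti hL
  rw [hω]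
  exact smul_ne_zero hc (ιMulti_ne_zero_of_linearIndependent hw)

theorem eq_of_plueckerVec_eq_smul {r : ℕ} {L L' : Submodule k V} (hL : finrank k L = r)
    (hL' : finrank k L' = r) {c : k} (hc : c ≠ 0) (h : plueckerVec r L' = c • plueckerVec r L) :
    L' = L := by
  rw [← wedgeAnnihilator_plueckerVec hL, ← wedgeAnnihilator_plueckerVec hL', h,
    wedgeAnnihilator_smul hc]

theorem wedgeAnnihilator_ι_mul_plueckerVec {r : ℕ} {L : Submodule k V} (hL : finrank k L = r)
    {v : V} (hv : v ∉ L) : wedgeAnnihilator (ι k v * plueckerVec r L) = k ∙ v ⊔ L := by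
  obtain ⟨w, hw, hwL, c, hc, hω⟩ := exists_plueckerVec_eq_smul_ιMulti hL
  rw [hω, mul_smul_comm, wedgeAnnihilator_smul hc,
    wedgeAnnihilator_ι_mul_ιMulti hw (hwL ▸ hv), hwL]

end Pluecker

section Pencil

variable {k V : Type*} [Field k] [AddCommGroup V] [Module k V] [FiniteDimensional k V]

theorem ι_mul_plueckerVec_eq_zero_iff {r : ℕ} {L : Submodule k V} (hL : finrank k L = r)
    {x : V} : ι k x * plueckerVec r L = 0 ↔ x ∈ L := by
  rw [← mem_wedgeAnnihilator, wedgeAnnihilator_plueckerVec hL]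

theorem Submodule.finrank_inf_lt_left_of_ne {L₁ L₂ : Submodule k V}
    (h : finrank k L₁ = finrank k L₂) (h12 : L₁ ≠ L₂) :
    finrank k ↥(L₁ ⊓ L₂) < finrank k L₁ := by
  refine Submodule.finrank_lt_finrank_of_lt (inf_le_left.lt_of_ne fun h' => h12 ?_)
  exact Submodule.eq_of_le_of_finrank_le (inf_eq_left.1 h') h.ge

theorem le_span_singleton_sup_of_ι_mul_plueckerVec_add_eq_zero {r : ℕ}
    {L₁ L₂ : Submodule k V} (h₁ : finrank k L₁ = r) (h₂ : finrank k L₂ = r) {v : V}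
    (hv : ι k v * (plueckerVec r L₁ + plueckerVec r L₂) = 0) (hvN : v ∉ L₁ ⊓ L₂) :
    L₂ ≤ k ∙ v ⊔ L₁ := by
  have hv₂ : ι k v * plueckerVec r L₂ = -(ι k v * plueckerVec r L₁) := by
    rw [mul_add] at hv
    exact eq_neg_of_add_eq_zero_right hv
  have hv₁ : v ∉ L₁ := by
    intro hv₁
    rw [(ι_mul_plueckerVec_eq_zero_iff h₁).2 hv₁, neg_zero,
      ι_mul_plueckerVec_eq_zero_iff h₂] at hv₂
    exact hvN ⟨hv₁, hv₂⟩
  calc L₂ = wedgeAnnihilator (plueckerVec r L₂) := (wedgeAnnihilator_plueckerVec h₂).symm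
    _ ≤ wedgeAnnihilator (ι k v * plueckerVec r L₂) := wedgeAnnihilator_le_ι_mul _ _
    _ = k ∙ v ⊔ L₁ := by
      rw [hv₂, wedgeAnnihilator_neg, wedgeAnnihilator_ι_mul_plueckerVec h₁ hv₁]

theorem finrank_inf_add_one_of_le_wedgeAnnihilator_add {r : ℕ} {L₁ L₂ L₃ : Submodule k V}
    (h₁ : finrank k L₁ = r) (h₂ : finrank k L₂ = r) (h₃ : finrank k L₃ = r) (h12 : L₁ ≠ L₂)
    (hL₃ : L₃ ≤ wedgeAnnihilator (plueckerVec r L₁ + plueckerVec r L₂)) :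
    finrank k ↥(L₁ ⊓ L₂) + 1 = r := by
  have hlt := Submodule.finrank_inf_lt_left_of_ne (h₁.trans h₂.symm) h12
  obtain ⟨v, hv₃, hvN⟩ := SetLike.not_le_iff_exists.1 fun h : L₃ ≤ L₁ ⊓ L₂ => by
    have := Submodule.finrank_mono h
    omega
  have hU : L₁ ⊔ L₂ ≤ k ∙ v ⊔ L₁ :=
    sup_le le_sup_right (le_span_singleton_sup_of_ι_mul_plueckerVec_add_eq_zero h₁ h₂ (hL₃ hv₃) hvN)
  have := Submodule.finrank_mono hU
  have := Submodule.finrank_add_le_finrank_add_finrank (k ∙ v) L₁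
  have := finrank_span_singleton (K := k) fun h : v = 0 => hvN (h ▸ zero_mem _)
  have := Submodule.finrank_sup_add_finrank_inf_eq L₁ L₂
  omega

theorem plueckerVec_eq_smul_ι_mul_ιMulti {m : ℕ} {N L : Submodule k V} {z : Fin m → V}
    (hz : LinearIndependent k z) (hzN : Submodule.span k (Set.range z) = N) (hNL : N ≤ L)
    (hL : finrank k L = m + 1) {y : V} (hyL : y ∈ L) (hyN : y ∉ N) :
    ∃ c : k, c ≠ 0 ∧ plueckerVec (m + 1) L = c • (ι k y * ιMulti k m z) := by
  rw [← ιMulti_cons]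
  refine plueckerVec_eq_smul_ιMulti hL (linearIndependent_finCons.2 ⟨hz, hzN ▸ hyN⟩) ?_
  exact Fin.cases hyL fun i => hNL (hzN ▸ Submodule.subset_span ⟨i, rfl⟩)

theorem map_mulRight_ιMulti_comp_ι_eq_span_plueckerVec {m : ℕ} {N L : Submodule k V}
    {z : Fin m → V} (hz : LinearIndependent k z) (hzN : Submodule.span k (Set.range z) = N)
    (hNL : N ≤ L) (hL : finrank k L = m + 1) :
    L.map (LinearMap.mulRight k (ιMulti k m z) ∘ₗ ι k) = k ∙ plueckerVec (m + 1) L := by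
  refine le_antisymm (Submodule.map_le_iff_le_comap.2 fun y hyL => ?_)
    (Submodule.span_singleton_le_iff_mem _ _ |>.2 ?_)
  · by_cases hyN : y ∈ N
    · have hy0 : ι k y * ιMulti k m z = 0 := (ι_mul_ιMulti_eq_zero_iff hz).2 (hzN ▸ hyN)
      simp [hy0]
    · obtain ⟨c, hc, hω⟩ := plueckerVec_eq_smul_ι_mul_ιMulti hz hzN hNL hL hyL hyN
      refine Submodule.mem_span_singleton.2 ⟨c⁻¹, ?_⟩
      simp [hω, smul_smul, inv_mul_cancel₀ hc]
  · have hN : finrank k N = m := by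
      rw [← hzN, finrank_span_eq_card hz, Fintype.card_fin]
    obtain ⟨y, hyL, hyN⟩ := SetLike.not_le_iff_exists.1 fun h : L ≤ N => by
      have := Submodule.finrank_mono h
      omega
    obtain ⟨c, hc, hω⟩ := plueckerVec_eq_smul_ι_mul_ιMulti hz hzN hNL hL hyL hyN
    exact ⟨c • y, L.smul_mem c hyL, by simp [hω]⟩

end Pencil

section Line

variable {k V : Type*} [Field k] [AddCommGroup V] [Module k V] [FiniteDimensional k V]

/-- The Plücker image of `X` is the projective line `ℙ(W)`. -/
structure IsPlueckerLine (r : ℕ) (X : Set (Submodule k V))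
    (W : Submodule k (ExteriorAlgebra k V)) : Prop where
  finrank_eq : ∀ L ∈ X, finrank k L = r
  finrank_eq_two : finrank k W = 2
  plueckerVec_mem : ∀ L ∈ X, plueckerVec r L ∈ W
  exists_plueckerVec_eq_smul :
    ∀ w ∈ W, w ≠ 0 → ∃ L ∈ X, ∃ c : k, c ≠ 0 ∧ plueckerVec r L = c • w

namespace IsPlueckerLine

variable {r : ℕ} {X : Set (Submodule k V)} {W : Submodule k (ExteriorAlgebra k V)}
  {L₁ L₂ : Submodule k V}

theorem span_pair_eq (hXW : IsPlueckerLine r X W) (h₁ : L₁ ∈ X) (h₂ : L₂ ∈ X) (h12 : L₁ ≠ L₂) :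
    Submodule.span k {plueckerVec r L₁, plueckerVec r L₂} = W := by
  have hr₁ := hXW.finrank_eq L₁ h₁
  have hr₂ := hXW.finrank_eq L₂ h₂
  have hind : LinearIndependent k ![plueckerVec r L₁, plueckerVec r L₂] := by
    refine (LinearIndependent.pair_iff' (plueckerVec_ne_zero hr₁)).2 fun a ha => h12 ?_
    have ha0 : a ≠ 0 := by
      rintro rfl
      exact plueckerVec_ne_zero hr₂ (by rw [← ha, zero_smul])
    exact (eq_of_plueckerVec_eq_smul hr₁ hr₂ ha0 ha.symm).symm
  have : FiniteDimensional k W := Module.finite_of_finrank_eq_succ hXW.finrank_eq_two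
  have hle : Submodule.span k {plueckerVec r L₁, plueckerVec r L₂} ≤ W :=
    Submodule.span_le.2 (Set.pair_subset (hXW.plueckerVec_mem L₁ h₁) (hXW.plueckerVec_mem L₂ h₂))
  refine Submodule.eq_of_le_of_finrank_le hle ?_
  rw [hXW.finrank_eq_two, ← Matrix.range_cons_cons_empty, finrank_span_eq_card hind,
    Fintype.card_fin]

theorem finrank_inf_add_one (hXW : IsPlueckerLine r X W) (h₁ : L₁ ∈ X) (h₂ : L₂ ∈ X)
    (h12 : L₁ ≠ L₂) : finrank k ↥(L₁ ⊓ L₂) + 1 = r := by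
  have hr₁ := hXW.finrank_eq L₁ h₁
  have hr₂ := hXW.finrank_eq L₂ h₂
  have hsum : plueckerVec r L₁ + plueckerVec r L₂ ≠ 0 := fun h => h12 <| Eq.symm <|
    eq_of_plueckerVec_eq_smul hr₁ hr₂ (neg_ne_zero.2 one_ne_zero)
      (by rw [neg_one_smul]; exact eq_neg_of_add_eq_zero_right h)
  obtain ⟨L₃, h₃, c, hc, hω₃⟩ := hXW.exists_plueckerVec_eq_smul _
    (W.add_mem (hXW.plueckerVec_mem L₁ h₁) (hXW.plueckerVec_mem L₂ h₂)) hsum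
  have hr₃ := hXW.finrank_eq L₃ h₃
  refine finrank_inf_add_one_of_le_wedgeAnnihilator_add hr₁ hr₂ hr₃ h12 ?_
  rw [← wedgeAnnihilator_smul hc, ← hω₃, wedgeAnnihilator_plueckerVec hr₃]

theorem eq_setOf (hXW : IsPlueckerLine r X W) (h₁ : L₁ ∈ X) (h₂ : L₂ ∈ X) (h12 : L₁ ≠ L₂) :
    X = {L : Submodule k V | L₁ ⊓ L₂ ≤ L ∧ L ≤ L₁ ⊔ L₂ ∧ finrank k L = r} := by
  have hN := hXW.finrank_inf_add_one h₁ h₂ h12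
  obtain ⟨m, rfl⟩ : ∃ m, r = m + 1 := ⟨_, hN.symm⟩
  obtain ⟨z, hz, hzN⟩ := (L₁ ⊓ L₂).exists_linearIndependent_span_eq (Nat.succ_injective hN)
  set φ := LinearMap.mulRight k (ιMulti k m z) ∘ₗ ι k
  have hmap {L : Submodule k V} (hNL : L₁ ⊓ L₂ ≤ L) (hL : finrank k L = m + 1) :
      L.map φ = k ∙ plueckerVec (m + 1) L :=
    map_mulRight_ιMulti_comp_ι_eq_span_plueckerVec hz hzN hNL hL
  have hUW : (L₁ ⊔ L₂).map φ = W := by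
    rw [Submodule.map_sup, hmap inf_le_left (hXW.finrank_eq L₁ h₁),
      hmap inf_le_right (hXW.finrank_eq L₂ h₂), ← Submodule.span_insert]
    exact hXW.span_pair_eq h₁ h₂ h12
  ext L
  refine ⟨fun hL => ?_, fun ⟨hNL, hLU, hL⟩ => ?_⟩
  · have hLr := hXW.finrank_eq L hL
    obtain ⟨y, hyU, hy⟩ := hUW ▸ hXW.plueckerVec_mem L hL
    have hyN : y ∉ L₁ ⊓ L₂ := fun hyN => plueckerVec_ne_zero hLr <| by
      rw [← hy]
      exact (ι_mul_ιMulti_eq_zero_iff hz).2 (hzN ▸ hyN)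
    have hLy : L = k ∙ y ⊔ L₁ ⊓ L₂ := by
      rw [← wedgeAnnihilator_plueckerVec hLr, ← hy, ← hzN]
      exact wedgeAnnihilator_ι_mul_ιMulti hz (hzN ▸ hyN)
    refine ⟨hLy ▸ le_sup_right, hLy ▸ sup_le ?_ (inf_le_left.trans le_sup_left), hLr⟩
    exact (Submodule.span_singleton_le_iff_mem _ _).2 hyU
  · obtain ⟨L', hL', c, hc, hω⟩ := hXW.exists_plueckerVec_eq_smul _
      (hUW ▸ Submodule.map_mono hLU (hmap hNL hL ▸ Submodule.mem_span_singleton_self _))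
      (plueckerVec_ne_zero hL)
    rwa [← eq_of_plueckerVec_eq_smul hL (hXW.finrank_eq L' hL') hc hω]

theorem sup_eq_and_inf_eq (hXW : IsPlueckerLine r X W) (h₁ : L₁ ∈ X) (h₂ : L₂ ∈ X)
    (h12 : L₁ ≠ L₂) {M₁ M₂ : Submodule k V} (hM₁ : M₁ ∈ X) (hM₂ : M₂ ∈ X) (hM : M₁ ≠ M₂) :
    M₁ ⊔ M₂ = L₁ ⊔ L₂ ∧ M₁ ⊓ M₂ = L₁ ⊓ L₂ := by
  have hdimM := hXW.finrank_inf_add_one hM₁ hM₂ hM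
  have hdimL := hXW.finrank_inf_add_one h₁ h₂ h12
  have eM := Submodule.finrank_sup_add_finrank_inf_eq M₁ M₂
  have eL := Submodule.finrank_sup_add_finrank_inf_eq L₁ L₂
  rw [hXW.finrank_eq L₁ h₁, hXW.finrank_eq L₂ h₂] at eL
  rw [hXW.eq_setOf h₁ h₂ h12] at hM₁ hM₂
  obtain ⟨hN₁, hU₁, hr₁⟩ := hM₁
  obtain ⟨hN₂, hU₂, hr₂⟩ := hM₂
  exact ⟨Submodule.eq_of_le_of_finrank_le (sup_le hU₁ hU₂) (by omega),
    (Submodule.eq_of_le_of_finrank_le (le_inf hN₁ hN₂) (by omega)).symm⟩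

end IsPlueckerLine

end Line

theorem line_in_grassmannian_general {k V : Type*} [Field k] [AddCommGroup V] [Module k V]
    [FiniteDimensional k V] (r : ℕ) (X : Set (Submodule k V))
    (hX : ∀ L ∈ X, finrank k ↥L = r)
    (hline : ∃ W : Submodule k (ExteriorAlgebra k V), finrank k ↥W = 2 ∧
      W ≤ ⋀[k]^r V ∧ (∀ L ∈ X, plueckerVec r L ∈ W) ∧
      (∀ w ∈ W, w ≠ 0 → ∃ L ∈ X, ∃ c : k, c ≠ 0 ∧ plueckerVec r L = c • w))
    (L₁ L₂ : Submodule k V) (h₁ : L₁ ∈ X) (h₂ : L₂ ∈ X) (h12 : L₁ ≠ L₂) :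
    X = {L : Submodule k V | L₁ ⊓ L₂ ≤ L ∧ L ≤ L₁ ⊔ L₂ ∧ finrank k ↥L = r} ∧
    (∀ M₁ ∈ X, ∀ M₂ ∈ X, M₁ ≠ M₂ → M₁ ⊔ M₂ = L₁ ⊔ L₂ ∧ M₁ ⊓ M₂ = L₁ ⊓ L₂) := by
  obtain ⟨W, hW, -, hmem, hsurj⟩ := hline
  have hXW : IsPlueckerLine r X W := ⟨hX, hW, hmem, hsurj⟩
  exact ⟨hXW.eq_setOf h₁ h₂ h12,
    fun _ hM₁ _ hM₂ hM => hXW.sup_eq_and_inf_eq h₁ h₂ h12 hM₁ hM₂ hM⟩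

/-- Let `X` be a set of `r`-dimensional subspaces of `V` whose Plücker image is a
projective line in `ℙ(Λ^r V)` (the projectivization of a `2`-dimensional subspace `W` of
`Λ^r V`), and let `L₁ ≠ L₂` be two points of `X`.  Then
`X = {L : L₁∩L₂ ⊆ L ⊆ L₁+L₂, dim L = r} = Grass¹((L₁+L₂)/(L₁∩L₂))`, and the subspaces
`L₁+L₂` and `L₁∩L₂` do not depend on the choice of the two distinct points of `X`. -/
theorem line_in_grassmannian {k V : Type*} [Field k] [AddCommGroup V] [Module k V]
    [FiniteDimensional k V] (r : ℕ) (hr : 1 ≤ r) (X : Set (Submodule k V))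
    (hX : ∀ L ∈ X, finrank k ↥L = r)
    (hline : ∃ W : Submodule k (ExteriorAlgebra k V), finrank k ↥W = 2 ∧
      W ≤ ⋀[k]^r V ∧ (∀ L ∈ X, plueckerVec r L ∈ W) ∧
      (∀ w ∈ W, w ≠ 0 → ∃ L ∈ X, ∃ c : k, c ≠ 0 ∧ plueckerVec r L = c • w))
    (L₁ L₂ : Submodule k V) (h₁ : L₁ ∈ X) (h₂ : L₂ ∈ X) (h12 : L₁ ≠ L₂) :
    X = {L : Submodule k V | L₁ ⊓ L₂ ≤ L ∧ L ≤ L₁ ⊔ L₂ ∧ finrank k ↥L = r} ∧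
    (∀ M₁ ∈ X, ∀ M₂ ∈ X, M₁ ≠ M₂ → M₁ ⊔ M₂ = L₁ ⊔ L₂ ∧ M₁ ⊓ M₂ = L₁ ⊓ L₂) :=
  line_in_grassmannian_general r X hX hline L₁ L₂ h₁ h₂ h12
end

section
/- For distinct r-dimensional subspaces L₁, L₂ of V with dim(L₁∩L₂) = r-1 (equivalently dim(L₁+L₂) = r+1), and any v₁∧...∧vᵣ-type decomposable vectors: every subspace L₃ with L₁∩L₂ ⊆ L₃ ⊆ L₁+L₂, dim L₃ = r, has Plücker coordinate vector lying in the span of those of L₁ and L₂; i.e. ω(L₃) ∈ ⟨ω(L₁), ω(L₂)⟩ ⊆ Λ^r V, where ω(L) denotes a wedge of a basis of L. -/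
/-
For a basis `e` of `L₁ ⊓ L₂` (of size `r - 1`) and `v ∈ L₃ \ (L₁ ⊓ L₂)`, the family `(e, v)` is a
basis of `L₃`, so `ω(L₃)` is a multiple of `e ∧ v`. Writing `v = x₁ + x₂` with `xᵢ ∈ Lᵢ`, we get
`e ∧ v = e ∧ x₁ + e ∧ x₂`, and `e ∧ xᵢ` is a multiple of `ω(Lᵢ)` because it is the wedge of `r`
vectors of the `r`-dimensional space `Lᵢ`.
-/

open Module Classical

section Pluecker

open ExteriorAlgebra Submodule

variable {k V : Type*} [Field k] [AddCommGroup V] [Module k V] {r : ℕ} {L : Submodule k V}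

theorem iMulti_mem_span_iMulti_basis (b : Basis (Fin r) k L) {w : Fin r → V}
    (hw : ∀ i, w i ∈ L) : ιMulti k r w ∈ span k {ιMulti k r (fun i => (b i : V))} := by
  have := ((ιMulti k r).compLinearMap L.subtype).apply_eq_basis_det_smul b (fun i => ⟨w i, hw i⟩)
  exact this ▸ smul_mem _ _ (mem_span_singleton_self _)

theorem iMulti_mem_span_plueckerVec [FiniteDimensional k V] (hL : finrank k L = r)
    {w : Fin r → V} (hw : ∀ i, w i ∈ L) : ιMulti k r w ∈ span k {plueckerVec r L} := by
  have hb : Nonempty (Basis (Fin r) k L) := ⟨finBasisOfFinrankEq k L hL⟩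
  rw [plueckerVec, dif_pos hb]
  exact iMulti_mem_span_iMulti_basis _ hw

theorem plueckerVec_mem_span_iMulti [FiniteDimensional k V] (hL : finrank k L = r)
    {w : Fin r → V} (hli : LinearIndependent k w) (hw : ∀ i, w i ∈ L) :
    plueckerVec r L ∈ span k {ιMulti k r w} := by
  let b : Basis (Fin r) k L := basisOfLinearIndependentOfCardEqFinrank' (fun i => ⟨w i, hw i⟩)
    (LinearIndependent.of_comp L.subtype hli) (by simp [hL])
  unfold plueckerVec
  split_ifs with h
  · simpa [b] using iMulti_mem_span_iMulti_basis b fun i => (h.some i).2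
  · exact zero_mem _

end Pluecker

theorem pluecker_vec_mem_span_general {k V : Type*} [Field k] [AddCommGroup V] [Module k V]
    [FiniteDimensional k V] (r : ℕ) (hr : 1 ≤ r) (L₁ L₂ L₃ : Submodule k V)
    (hr1 : finrank k L₁ = r) (hr2 : finrank k L₂ = r)
    (hinf : finrank k ↥(L₁ ⊓ L₂) = r - 1)
    (h1 : L₁ ⊓ L₂ ≤ L₃) (h2 : L₃ ≤ L₁ ⊔ L₂) (hr3 : finrank k L₃ = r) :
    plueckerVec r L₃ ∈ Submodule.span k {plueckerVec r L₁, plueckerVec r L₂} := by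
  obtain ⟨s, rfl⟩ : ∃ s, r = s + 1 := ⟨r - 1, by omega⟩
  obtain ⟨b⟩ : Nonempty (Basis (Fin s) k ↥(L₁ ⊓ L₂)) := ⟨finBasisOfFinrankEq k _ hinf⟩
  let e : Fin s → V := (L₁ ⊓ L₂).subtype ∘ b
  obtain ⟨v, hvL₃, hv⟩ : ∃ v ∈ L₃, v ∉ L₁ ⊓ L₂ := SetLike.not_le_iff_exists.1 fun h => by
    have := Submodule.finrank_mono h
    omega
  have hli : LinearIndependent k (Fin.snoc e v : Fin (s + 1) → V) := by
    refine linearIndependent_finSnoc.2 ⟨b.linearIndependent.map' _ (L₁ ⊓ L₂).ker_subtype, ?_⟩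
    exact fun hspan => hv (Submodule.span_le.2 (Set.range_subset_iff.2 fun i => (b i).2) hspan)
  have hmem : ∀ {L : Submodule k V} {x}, L₁ ⊓ L₂ ≤ L → x ∈ L →
      ∀ i, (Fin.snoc e x : Fin (s + 1) → V) i ∈ L := fun hL hx =>
    Fin.forall_fin_succ'.2 ⟨fun i => by simpa [e] using hL (b i).2, by simpa using hx⟩
  refine Submodule.span_le.2 ?_ (plueckerVec_mem_span_iMulti hr3 hli (hmem h1 hvL₃))
  obtain ⟨x₁, hx₁, x₂, hx₂, rfl⟩ := Submodule.mem_sup.1 (h2 hvL₃)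
  rw [Set.singleton_subset_iff, SetLike.mem_coe, ← AlternatingMap.coe_multilinearMap,
    MultilinearMap.snoc_add]
  exact add_mem
    (Submodule.span_mono (by simp) (iMulti_mem_span_plueckerVec hr1 (hmem inf_le_left hx₁)))
    (Submodule.span_mono (by simp) (iMulti_mem_span_plueckerVec hr2 (hmem inf_le_right hx₂)))

/-- For distinct `r`-dimensional subspaces `L₁, L₂` of `V` with `dim (L₁∩L₂) = r-1`
(equivalently `dim (L₁+L₂) = r+1`), every subspace `L₃` with `L₁∩L₂ ⊆ L₃ ⊆ L₁+L₂` and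
`dim L₃ = r` has its Plücker vector in the span of those of `L₁` and `L₂`:
`ω(L₃) ∈ ⟨ω(L₁), ω(L₂)⟩ ⊆ Λ^r V`. -/
theorem pluecker_vec_mem_span {k V : Type*} [Field k] [AddCommGroup V] [Module k V]
    [FiniteDimensional k V] (r : ℕ) (hr : 1 ≤ r) (L₁ L₂ L₃ : Submodule k V)
    (h12 : L₁ ≠ L₂) (hr1 : finrank k L₁ = r) (hr2 : finrank k L₂ = r)
    (hinf : finrank k ↥(L₁ ⊓ L₂) = r - 1)
    (h1 : L₁ ⊓ L₂ ≤ L₃) (h2 : L₃ ≤ L₁ ⊔ L₂) (hr3 : finrank k L₃ = r) :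
    plueckerVec r L₃ ∈ Submodule.span k {plueckerVec r L₁, plueckerVec r L₂} :=
  pluecker_vec_mem_span_general r hr L₁ L₂ L₃ hr1 hr2 hinf h1 h2 hr3
end

section
/- The quadratic Plücker relations hold on the image of the Plücker embedding: for an r-dimensional subspace L of a finite-dimensional vector space V with Plücker coordinates X_S (indexed by strictly increasing r-tuples S from a basis of V), for any r-tuples S = (s₁,...,sᵣ), S' = (s'₁,...,s'ᵣ) and any index position j, one has X_S · X_{S'} = ∑_{l=1}^{r} X_{(s₁,...,s_{j-1},s'_l,s_{j+1},...,sᵣ)} · X_{(s'₁,...,s'_{l-1},s_j,s'_{l+1},...,s'ᵣ)}, with the sign/antisymmetry convention that X of a tuple with a repeated index is 0 and X is alternating in its indices. -/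
open Module

/-
With `U`, `V` the `r × r` coordinate matrices whose rows are indexed by `S` and `S'`, changing
one index changes one row, so the relation is the determinant identity
`det U · det V = ∑ₘ det (U with row j := V m) · det (V with row m := U j)`.
Cramer's rule, read row-wise, says `∑ₘ det (V with row m := w) • V m = det V • w`; apply the
linear functional `v ↦ det (U with row j := v)` to it with `w = U j`.
-/

/-- The Plücker coordinate `X_T` of an `r`-dimensional subspace spanned by
`l₁, ..., lᵣ`, with respect to a basis `(e_i)` of `V`, at a tuple
`T = (t₁, ..., tᵣ)` of indices: the determinant `det (coefficient of e_{tₐ} in l_b)`.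
This is the coefficient of `e_{t₁} ∧ ... ∧ e_{tᵣ}` in `l₁ ∧ ... ∧ lᵣ` when `T` is
strictly increasing, extended alternatingly to arbitrary tuples (it is alternating in
the indices and vanishes on tuples with a repeated index). -/
noncomputable def plueckerCoord {k V : Type*} [Field k] [AddCommGroup V] [Module k V]
    {d r : ℕ} (B : Basis (Fin d) k V) (l : Fin r → V) (T : Fin r → Fin d) : k :=
  Matrix.det (Matrix.of fun a b => B.repr (l b) (T a))

namespace Matrix

variable {n R : Type*} [Fintype n] [DecidableEq n] [CommRing R]

theorem sum_det_updateRow_smul_row (V : Matrix n n R) (w : n → R) :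
    ∑ m, (V.updateRow m w).det • V m = V.det • w := by
  ext i
  have := congr_fun (mulVec_cramer Vᵀ w) i
  simpa [mulVec, dotProduct, cramer_transpose_apply, Finset.sum_apply, mul_comm] using this

theorem sum_map_row_mul_det_updateRow (f : (n → R) →ₗ[R] R) (V : Matrix n n R) (w : n → R) :
    ∑ m, f (V m) * (V.updateRow m w).det = f w * V.det := by
  have := congr_arg f (sum_det_updateRow_smul_row V w)
  simpa [map_sum, mul_comm] using this

theorem det_mul_det_eq_sum_det_updateRow_mul_det_updateRow (U V : Matrix n n R) (j : n) :
    U.det * V.det = ∑ m, (U.updateRow j (V m)).det * (V.updateRow m (U j)).det := by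
  let f := (detRowAlternating : (n → R) [⋀^n]→ₗ[R] R).toMultilinearMap.toLinearMap U j
  have hf : ∀ v, f v = (U.updateRow j v).det := fun v => rfl
  have := sum_map_row_mul_det_updateRow f V (U j)
  simp only [hf, updateRow_eq_self] at this
  exact this.symm

end Matrix

theorem plueckerCoord_update {k V : Type*} [Field k] [AddCommGroup V] [Module k V]
    {d r : ℕ} (B : Basis (Fin d) k V) (l : Fin r → V) (T : Fin r → Fin d) (j : Fin r)
    (t : Fin d) :
    plueckerCoord B l (Function.update T j t) =
      ((Matrix.of fun a b => B.repr (l b) (T a)).updateRow j fun b => B.repr (l b) t).det := by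
  simp only [plueckerCoord]
  congr 1
  ext a b
  rcases eq_or_ne a j with rfl | h <;> simp [Matrix.updateRow_apply, *]

theorem pluecker_relations_general {k V : Type*} [Field k] [AddCommGroup V] [Module k V]
    {d r : ℕ} (B : Basis (Fin d) k V)
    (L : Submodule k V) (l : Basis (Fin r) k ↥L)
    (S S' : Fin r → Fin d) (j : Fin r) :
    plueckerCoord B (fun b => (l b : V)) S * plueckerCoord B (fun b => (l b : V)) S' =
      ∑ m : Fin r,
        plueckerCoord B (fun b => (l b : V)) (Function.update S j (S' m)) *
          plueckerCoord B (fun b => (l b : V)) (Function.update S' m (S j)) := by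
  simp only [plueckerCoord_update]
  exact Matrix.det_mul_det_eq_sum_det_updateRow_mul_det_updateRow _ _ j

/-- The quadratic Plücker relations hold for the Plücker coordinates of an
`r`-dimensional subspace `L` of `V`: for any tuples `S, S'` of indices and any position
`j`, `X_S · X_{S'} = ∑ₘ X_{S with jth entry replaced by s'ₘ} · X_{S' with mth entry
replaced by sⱼ}`. -/
theorem pluecker_relations {k V : Type*} [Field k] [AddCommGroup V] [Module k V]
    [FiniteDimensional k V] {d r : ℕ} (B : Basis (Fin d) k V)
    (L : Submodule k V) (hL : finrank k ↥L = r) (l : Basis (Fin r) k ↥L)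
    (S S' : Fin r → Fin d) (j : Fin r) :
    plueckerCoord B (fun b => (l b : V)) S * plueckerCoord B (fun b => (l b : V)) S' =
      ∑ m : Fin r,
        plueckerCoord B (fun b => (l b : V)) (Function.update S j (S' m)) *
          plueckerCoord B (fun b => (l b : V)) (Function.update S' m (S j)) :=
  pluecker_relations_general B L l S S' j
end
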